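/- Let H be a finite-dimensional Hilbert space with dim H ≥ 2 and μ a quantum probability measure given by μ(A) = tr(Π_A T) with T positive semidefinite of trace 1. Suppose there exist unit vectors u₁, …, uₙ spanning H such that μ(span uᵢ) is the same value c for all i and c ≤ μ(span x) for every unit vector x. Then T = (1/dim H)·I, i.e., μ is the uniform measure μ(A) = dim A / dim H. -/

import Mathlib

/-!
Put `S := T - c • id`. Minimality of `c` on unit vectors says exactly that `S` is a positive
operator, and for a positive operator `re ⟪S x, x⟫ = 0` forces `S x = 0`. So `S` vanishes on the
spanning family `u`, hence `T = c • id`, and `tr T = 1` gives `c = 1 / dim H`.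
-/

noncomputable def proj {H : Type*} [NormedAddCommGroup H] [InnerProductSpace ℂ H]
    [FiniteDimensional ℂ H] (A : Submodule ℂ H) : H →ₗ[ℂ] H :=
  (A.subtypeL.comp A.orthogonalProjection).toLinearMap

noncomputable def mu {H : Type*} [NormedAddCommGroup H] [InnerProductSpace ℂ H]
    [FiniteDimensional ℂ H] (T : H →ₗ[ℂ] H) (A : Submodule ℂ H) : ℝ :=
  RCLike.re (LinearMap.trace ℂ H ((proj A) ∘ₗ T))

open scoped InnerProductSpace
open RCLike

namespace LinearMap

variable {𝕜 E : Type*} [RCLike 𝕜] [NormedAddCommGroup E] [InnerProductSpace 𝕜 E]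

theorem IsPositive.apply_eq_zero_of_re_inner_eq_zero {S : E →ₗ[𝕜] E} (hS : S.IsPositive) {x : E}
    (hx : re ⟪S x, x⟫_𝕜 = 0) : S x = 0 := by
  have hSx : re ⟪S x, S x⟫_𝕜 = ‖S x‖ ^ 2 := inner_self_eq_norm_sq (S x)
  have hSSx : re ⟪S (S x), x⟫_𝕜 = ‖S x‖ ^ 2 := by rw [hS.isSymmetric, hSx]
  -- `t ↦ re ⟪S (x + t • S x), x + t • S x⟫` is a nonnegative quadratic with no constant term
  have hquad : ∀ t : ℝ, 0 ≤ re ⟪S (S x), S x⟫_𝕜 * (t * t) + 2 * ‖S x‖ ^ 2 * t + 0 := by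
    intro t
    have := hS.re_inner_nonneg_left (x + (t : 𝕜) • S x)
    simp only [map_add, map_smul, inner_add_left, inner_add_right, inner_smul_left,
      inner_smul_right, conj_ofReal, re_ofReal_mul, hx, hSx, hSSx] at this
    linarith
  have hdiscrim := discrim_le_zero hquad
  rw [discrim] at hdiscrim
  have : ‖S x‖ ^ 2 = 0 := by nlinarith [sq_nonneg (‖S x‖ ^ 2)]
  simpa using this

theorem apply_eq_of_le_of_re_inner_eq {S T : E →ₗ[𝕜] E} (hST : S ≤ T) {x : E}
    (h : re ⟪T x, x⟫_𝕜 = re ⟪S x, x⟫_𝕜) : T x = S x := by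
  have hpos : (T - S).IsPositive := (le_def S T).mp hST
  have := hpos.apply_eq_zero_of_re_inner_eq_zero (x := x) (by simp [inner_sub_left, h])
  rwa [sub_apply, sub_eq_zero] at this

theorem IsSymmetric.smul_id_le {T : E →ₗ[𝕜] E} (hT : T.IsSymmetric) {c : ℝ}
    (h : ∀ x, ‖x‖ = 1 → c ≤ re ⟪T x, x⟫_𝕜) : (c : 𝕜) • id ≤ T := by
  refine (le_def _ _).mpr ⟨hT.sub (IsSymmetric.id.smul (conj_ofReal c)), fun x => ?_⟩
  rcases eq_or_ne x 0 with rfl | hx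
  · simp
  have hnorm : ‖x‖ ≠ 0 := norm_ne_zero_iff.mpr hx
  have hunit : ‖((‖x‖⁻¹ : ℝ) : 𝕜) • x‖ = 1 := by
    rw [norm_smul, norm_ofReal, abs_inv, abs_norm, inv_mul_cancel₀ hnorm]
  have hscale := h _ hunit
  simp only [map_smul, inner_smul_left, inner_smul_right, conj_ofReal, re_ofReal_mul] at hscale
  have hxx : re ⟪x, x⟫_𝕜 = ‖x‖ ^ 2 := inner_self_eq_norm_sq x
  simp only [sub_apply, smul_apply, id_apply, inner_sub_left, inner_smul_left, conj_ofReal,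
    map_sub, re_ofReal_mul, hxx, sub_nonneg]
  field_simp at hscale
  linarith

theorem IsSymmetric.eq_smul_id_of_span_eq_top {T : E →ₗ[𝕜] E} (hT : T.IsSymmetric) {c : ℝ}
    (hmin : ∀ x, ‖x‖ = 1 → c ≤ re ⟪T x, x⟫_𝕜) {s : Set E} (hs : Submodule.span 𝕜 s = ⊤)
    (hc : ∀ x ∈ s, re ⟪T x, x⟫_𝕜 = c * ‖x‖ ^ 2) : T = (c : 𝕜) • id := by
  refine ext_on hs fun x hx => apply_eq_of_le_of_re_inner_eq (hT.smul_id_le hmin) ?_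
  simp [inner_smul_left, hc x hx]

end LinearMap

section QuantumMeasure

variable {H : Type*} [NormedAddCommGroup H] [InnerProductSpace ℂ H] [FiniteDimensional ℂ H]

theorem proj_span_singleton {x : H} (hx : ‖x‖ = 1) :
    proj (ℂ ∙ x) = (InnerProductSpace.rankOne ℂ x x : H →L[ℂ] H) := by
  ext y
  simp [proj, Submodule.starProjection_unit_singleton ℂ hx]

theorem mu_span_singleton (T : H →ₗ[ℂ] H) {x : H} (hx : ‖x‖ = 1) :
    mu T (ℂ ∙ x) = re ⟪T x, x⟫_ℂ := by
  have hcomp : T ∘ₗ (InnerProductSpace.rankOne ℂ x x : H →L[ℂ] H) =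
      ((InnerProductSpace.rankOne ℂ (T x) x : H →L[ℂ] H) : H →ₗ[ℂ] H) := by
    ext y
    simp
  rw [mu, proj_span_singleton hx, LinearMap.trace_comp_comm', hcomp,
    InnerProductSpace.trace_rankOne, inner_re_symm]

theorem trace_proj (A : Submodule ℂ H) : LinearMap.trace ℂ H (proj A) = Module.finrank ℂ A := by
  refine LinearMap.IsProj.trace ⟨fun x => (A.orthogonalProjectionOnto x).2, fun x hx => ?_⟩
  simp [proj, Submodule.orthogonalProjectionOnto_mem_subspace_eq_self ⟨x, hx⟩]

theorem mu_smul_id (a : ℝ) (A : Submodule ℂ H) :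
    mu ((a : ℂ) • LinearMap.id) A = a * Module.finrank ℂ A := by
  rw [mu, LinearMap.comp_smul, LinearMap.comp_id, map_smul, trace_proj, smul_eq_mul]
  simp

end QuantumMeasure

theorem stmt12_general {H : Type*} [NormedAddCommGroup H] [InnerProductSpace ℂ H]
    [FiniteDimensional ℂ H]
    (T : H →ₗ[ℂ] H)
    (hsym : T.IsSymmetric)
    (htr : LinearMap.trace ℂ H T = 1)
    (n : ℕ) (u : Fin n → H) (hu : ∀ i, ‖u i‖ = 1)
    (hspan : Submodule.span ℂ (Set.range u) = ⊤)
    (c : ℝ) (hc : ∀ i, mu T (Submodule.span ℂ {u i}) = c)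
    (hmin : ∀ x : H, ‖x‖ = 1 → c ≤ mu T (Submodule.span ℂ {x})) :
    T = ((Module.finrank ℂ H : ℂ))⁻¹ • LinearMap.id ∧
    ∀ A : Submodule ℂ H,
      mu T A = (Module.finrank ℂ A : ℝ) / (Module.finrank ℂ H : ℝ) := by
  have hT : T = (c : ℂ) • LinearMap.id := by
    refine hsym.eq_smul_id_of_span_eq_top (fun x hx => ?_) hspan ?_
    · simpa [mu_span_singleton T hx] using hmin x hx
    · rintro _ ⟨i, rfl⟩
      rw [← mu_span_singleton T (hu i), hc i, hu i, one_pow, mul_one]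
  have hc_inv : c = (Module.finrank ℂ H : ℝ)⁻¹ := by
    rw [hT, map_smul, LinearMap.trace_id, smul_eq_mul] at htr
    exact eq_inv_of_mul_eq_one_left (by exact_mod_cast htr)
  refine ⟨by rw [hT, hc_inv, Complex.ofReal_inv, Complex.ofReal_natCast], fun A => ?_⟩
  rw [hT, mu_smul_id, hc_inv, inv_mul_eq_div]

/-- if a spanning family of unit vectors all have the same,
minimal, measure, then the quantum probability is uniform. -/
theorem stmt12 {H : Type*} [NormedAddCommGroup H] [InnerProductSpace ℂ H]
    [FiniteDimensional ℂ H] (hdim : 2 ≤ Module.finrank ℂ H)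
    (T : H →ₗ[ℂ] H)
    (hsym : T.IsSymmetric)
    (hpos : ∀ x : H, 0 ≤ RCLike.re (inner ℂ (T x) x : ℂ))
    (htr : LinearMap.trace ℂ H T = 1)
    (n : ℕ) (u : Fin n → H) (hu : ∀ i, ‖u i‖ = 1)
    (hspan : Submodule.span ℂ (Set.range u) = ⊤)
    (c : ℝ) (hc : ∀ i, mu T (Submodule.span ℂ {u i}) = c)
    (hmin : ∀ x : H, ‖x‖ = 1 → c ≤ mu T (Submodule.span ℂ {x})) :
    T = ((Module.finrank ℂ H : ℂ))⁻¹ • LinearMap.id ∧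
    ∀ A : Submodule ℂ H,
      mu T A = (Module.finrank ℂ A : ℝ) / (Module.finrank ℂ H : ℝ) :=
  stmt12_general T hsym htr n u hu hspan c hc hmin
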